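/- arXiv:1904.11129 — 2 statements merged into one kernel-verified Lean document; each statement's English description precedes it below -/
import Mathlib

section
/- Let w : Γ → ℝ≥0 be finitely supported and let S γ be a monomial shift for each γ in the support of w. Then ‖∑_γ w γ • (S γ ∘ (S γ)†)‖ ≤ ‖∑_γ w γ • ((S γ)† ∘ S γ)‖, where the sums are finite sums of bounded operators over the support of w. -/
/-!
The left side is at most `∑ w γ ‖S γ‖²` by the triangle inequality and `‖T T†‖ ≤ ‖T‖²`. A monomial
shift maps the orthogonal basis `z β` to the orthogonal family `z (γ + β)`, so the committee
inequality gives `‖S γ‖ ≤ ‖z γ‖`. Finally `∑ w γ ‖z γ‖² = ∑ w γ ‖S γ (z 0)‖²` is the value of the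
quadratic form of `∑ w γ (S γ)† S γ` at the unit vector `z 0`, hence at most the right side.
-/

open scoped NNReal InnerProductSpace
open ContinuousLinearMap

section Orthogonal

variable {𝕜 E F ι : Type*} [RCLike 𝕜] [NormedAddCommGroup E] [InnerProductSpace 𝕜 E]
  [NormedAddCommGroup F] [InnerProductSpace 𝕜 F]

theorem norm_sum_smul_sq_of_pairwise_inner_eq_zero {v : ι → E}
    (hv : Pairwise fun i j => ⟪v i, v j⟫_𝕜 = 0) (s : Finset ι) (c : ι → 𝕜) :
    ‖∑ i ∈ s, c i • v i‖ ^ 2 = ∑ i ∈ s, ‖c i‖ ^ 2 * ‖v i‖ ^ 2 := by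
  classical
  have hdiag : ⟪∑ i ∈ s, c i • v i, ∑ i ∈ s, c i • v i⟫_𝕜
      = ∑ i ∈ s, ⟪c i • v i, c i • v i⟫_𝕜 := by
    simp only [sum_inner, inner_sum]
    refine Finset.sum_congr rfl fun i hi => Finset.sum_eq_single i (fun j _ hji => ?_) (absurd hi)
    rw [inner_smul_left, inner_smul_right, hv hji, mul_zero, mul_zero]
  have : ((‖∑ i ∈ s, c i • v i‖ ^ 2 : ℝ) : 𝕜) = ((∑ i ∈ s, ‖c i • v i‖ ^ 2 : ℝ) : 𝕜) := by
    simp only [RCLike.ofReal_sum, RCLike.ofReal_pow, ← inner_self_eq_norm_sq_to_K, hdiag]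
  simp only [← norm_smul, ← mul_pow]
  exact_mod_cast this

theorem ContinuousLinearMap.opNorm_le_of_pairwise_inner_eq_zero {v : ι → E}
    (hv : Pairwise fun i j => ⟪v i, v j⟫_𝕜 = 0)
    (hdense : (Submodule.span 𝕜 (Set.range v)).topologicalClosure = ⊤) (T : E →L[𝕜] F)
    (hT : Pairwise fun i j => ⟪T (v i), T (v j)⟫_𝕜 = 0) {C : ℝ} (hC : 0 ≤ C)
    (hTv : ∀ i, ‖T (v i)‖ ≤ C * ‖v i‖) : ‖T‖ ≤ C := by
  refine T.opNorm_le_bound hC fun x => ?_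
  have hspan : Dense (Submodule.span 𝕜 (Set.range v) : Set E) :=
    Submodule.dense_iff_topologicalClosure_eq_top.mpr hdense
  refine hspan.induction (fun y hy => ?_) (isClosed_le (by fun_prop) (by fun_prop)) x
  obtain ⟨c, rfl⟩ := Finsupp.mem_span_range_iff_exists_finsupp.mp hy
  have hsq : ‖T (c.sum fun i a => a • v i)‖ ^ 2 ≤ (C * ‖c.sum fun i a => a • v i‖) ^ 2 := by
    simp only [Finsupp.sum, map_sum, map_smul, mul_pow,
      norm_sum_smul_sq_of_pairwise_inner_eq_zero hv, norm_sum_smul_sq_of_pairwise_inner_eq_zero hT,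
      Finset.mul_sum]
    refine Finset.sum_le_sum fun i _ => ?_
    calc ‖c i‖ ^ 2 * ‖T (v i)‖ ^ 2 ≤ ‖c i‖ ^ 2 * (C * ‖v i‖) ^ 2 := by gcongr; exact hTv i
      _ = C ^ 2 * (‖c i‖ ^ 2 * ‖v i‖ ^ 2) := by ring
  exact le_of_sq_le_sq hsq (by positivity)

end Orthogonal

theorem norm_le_of_apply_eq_shift {H Γ : Type*} [NormedAddCommGroup H] [InnerProductSpace ℂ H]
    [Add Γ] [IsLeftCancelAdd Γ] {z : Γ → H} (hz_orth : ∀ α β, α ≠ β → ⟪z α, z β⟫_ℂ = 0)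
    (hz_dense : (Submodule.span ℂ (Set.range z)).topologicalClosure = ⊤) {γ : Γ}
    (hγ : ∀ β, ‖z (γ + β)‖ ≤ ‖z γ‖ * ‖z β‖) (T : H →L[ℂ] H) (hT : ∀ β, T (z β) = z (γ + β)) :
    ‖T‖ ≤ ‖z γ‖ := by
  refine T.opNorm_le_of_pairwise_inner_eq_zero (fun α β => hz_orth α β) hz_dense
    (fun α β hαβ => ?_) (norm_nonneg _) fun β => (hT β).symm ▸ hγ β
  dsimp only
  rw [hT, hT]
  exact hz_orth _ _ fun h => hαβ (add_left_cancel h)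

section Weighted

variable {E F ι : Type*} [NormedAddCommGroup E] [InnerProductSpace ℂ E] [CompleteSpace E]
  [NormedAddCommGroup F] [InnerProductSpace ℂ F] [CompleteSpace F]
  (s : Finset ι) (w : ι → ℝ≥0) (T : ι → E →L[ℂ] F)

theorem norm_sum_smul_comp_adjoint_le :
    ‖∑ i ∈ s, ((w i : ℝ) : ℂ) • (T i ∘L adjoint (T i))‖ ≤ ∑ i ∈ s, (w i : ℝ) * ‖T i‖ ^ 2 := by
  refine (norm_sum_le _ _).trans (Finset.sum_le_sum fun i _ => ?_)
  rw [norm_smul, Complex.norm_real, Real.norm_of_nonneg (w i).coe_nonneg, sq]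
  gcongr
  calc ‖T i ∘L adjoint (T i)‖ ≤ ‖T i‖ * ‖adjoint (T i)‖ := opNorm_comp_le _ _
    _ = ‖T i‖ * ‖T i‖ := by rw [LinearIsometryEquiv.norm_map]

theorem sum_mul_norm_apply_sq_le_norm_sum_smul_adjoint_comp (x : E) :
    ∑ i ∈ s, (w i : ℝ) * ‖T i x‖ ^ 2
      ≤ ‖∑ i ∈ s, ((w i : ℝ) : ℂ) • (adjoint (T i) ∘L T i)‖ * ‖x‖ ^ 2 := by
  set A := ∑ i ∈ s, ((w i : ℝ) : ℂ) • (adjoint (T i) ∘L T i)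
  have hquad : RCLike.re ⟪x, A x⟫_ℂ = ∑ i ∈ s, (w i : ℝ) * ‖T i x‖ ^ 2 := by
    simp only [A, sum_apply, smul_apply, inner_sum, inner_smul_right, map_sum,
      apply_norm_sq_eq_inner_adjoint_right]
    exact Finset.sum_congr rfl fun i _ => Complex.re_ofReal_mul _ _
  calc ∑ i ∈ s, (w i : ℝ) * ‖T i x‖ ^ 2 = RCLike.re ⟪x, A x⟫_ℂ := hquad.symm
    _ ≤ ‖x‖ * ‖A x‖ := re_inner_le_norm _ _
    _ ≤ ‖x‖ * (‖A‖ * ‖x‖) := by gcongr; exact A.le_opNorm x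
    _ = ‖A‖ * ‖x‖ ^ 2 := by ring

end Weighted

theorem stmt_7_general
    {H : Type*} [NormedAddCommGroup H] [InnerProductSpace ℂ H] [CompleteSpace H]
    {Γ : Type*} [AddCancelMonoid Γ]
    (z : Γ → H)
    (hz_orth : ∀ α β, α ≠ β → (inner ℂ (z α) (z β) : ℂ) = 0)
    (hz_dense : (Submodule.span ℂ (Set.range z)).topologicalClosure = ⊤)
    (hz0 : ‖z 0‖ = 1)
    (hcomm : ∀ α β, ‖z (α + β)‖ ≤ ‖z α‖ * ‖z β‖)
    (w : Γ →₀ ℝ≥0)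
    (S : Γ → H →L[ℂ] H) (hS : ∀ γ ∈ w.support, ∀ β, S γ (z β) = z (γ + β)) :
    ‖∑ γ ∈ w.support, ((w γ : ℝ) : ℂ) • (S γ ∘L ContinuousLinearMap.adjoint (S γ))‖
      ≤ ‖∑ γ ∈ w.support, ((w γ : ℝ) : ℂ) • (ContinuousLinearMap.adjoint (S γ) ∘L S γ)‖ := by
  calc _ ≤ ∑ γ ∈ w.support, (w γ : ℝ) * ‖S γ‖ ^ 2 := norm_sum_smul_comp_adjoint_le _ _ _
    _ ≤ ∑ γ ∈ w.support, (w γ : ℝ) * ‖z γ‖ ^ 2 := by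
      gcongr with γ hγ
      exact norm_le_of_apply_eq_shift hz_orth hz_dense (hcomm γ) (S γ) (hS γ hγ)
    _ = ∑ γ ∈ w.support, (w γ : ℝ) * ‖S γ (z 0)‖ ^ 2 := by
      refine Finset.sum_congr rfl fun γ hγ => ?_
      rw [hS γ hγ, add_zero]
    _ ≤ _ := by
      simpa only [hz0, one_pow, mul_one] using
        sum_mul_norm_apply_sq_le_norm_sum_smul_adjoint_comp w.support w S (z 0)

/-- For finitely supported weights `w` and monomial shifts `S γ` (for `γ` in the
support of `w`), `‖∑ γ, w γ • (S γ ∘ (S γ)†)‖ ≤ ‖∑ γ, w γ • ((S γ)† ∘ S γ)‖`. -/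
theorem stmt_7
    {H : Type*} [NormedAddCommGroup H] [InnerProductSpace ℂ H] [CompleteSpace H]
    {Γ : Type*} [AddCancelMonoid Γ]
    (z : Γ → H)
    (hz_ne : ∀ α, z α ≠ 0)
    (hz_orth : ∀ α β, α ≠ β → (inner ℂ (z α) (z β) : ℂ) = 0)
    (hz_dense : (Submodule.span ℂ (Set.range z)).topologicalClosure = ⊤)
    (hz0 : ‖z 0‖ = 1)
    (hcomm : ∀ α β, ‖z (α + β)‖ ≤ ‖z α‖ * ‖z β‖)
    (w : Γ →₀ ℝ≥0)
    (S : Γ → H →L[ℂ] H) (hS : ∀ γ ∈ w.support, ∀ β, S γ (z β) = z (γ + β)) :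
    ‖∑ γ ∈ w.support, ((w γ : ℝ) : ℂ) • (S γ ∘L ContinuousLinearMap.adjoint (S γ))‖
      ≤ ‖∑ γ ∈ w.support, ((w γ : ℝ) : ℂ) • (ContinuousLinearMap.adjoint (S γ) ∘L S γ)‖ :=
  stmt_7_general z hz_orth hz_dense hz0 hcomm w S hS
end

section
/- Let (Ω, P) be a probability space and X : ℕ → Ω → H an i.i.d. sequence of Borel-measurable random variables each with nondegenerate distribution μ. For ω ∈ Ω and n ∈ ℕ, let P_n(ω) denote the orthogonal projection of H onto the (finite-dimensional) span of {X 0 ω, …, X n ω}. Then for P-almost every ω, P_n(ω) h → h as n → ∞ for every h ∈ H; that is, P_n(ω) converges to the identity in the strong operator topology. -/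
/-!
Fix `t ∈ H` and let `K(x)` be the closed span of a sequence `x`. The distance `r₀` from `t` to
`K(X 0, X 1, …)` is at most the distance `r₁` to `K(X 1, X 2, …)`, and the two have the same law
because the sequence is i.i.d.; so `r₀ = r₁` almost surely. Then the nearest point of
`K(X 1, …)` to `t` is also nearest in `K(X 0, …)`, so `g = t - P_{K(X 1, …)} t` is orthogonal to
`X 0`. Since `g` is independent of `X 0`, Fubini and nondegeneracy force `g = 0`, i.e.
`t ∈ K(X 0, …)`. Running `t` through a countable dense set shows that the span of the `X i ω` is
dense almost surely, and then the projections onto the increasing finite spans converge strongly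
to the identity. Measurability of all projections involved comes from the Gram–Schmidt formulas.
-/

open MeasureTheory ProbabilityTheory Filter Submodule Set InnerProductSpace
open scoped Topology

section HilbertSpace

variable {𝕜 E : Type*} [RCLike 𝕜] [NormedAddCommGroup E] [InnerProductSpace 𝕜 E]

instance (x : ℕ → E) (n : ℕ) : FiniteDimensional 𝕜 (span 𝕜 (x '' Iic n)) :=
  FiniteDimensional.span_of_finite 𝕜 ((finite_Iic n).image x)

theorem starProjection_span_image_Iic (x : ℕ → E) (n : ℕ) (t : E) :
    (span 𝕜 (x '' Iic n)).starProjection t =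
      t - gramSchmidt 𝕜 (Function.update x (n + 1) t) (n + 1) := by
  set y := Function.update x (n + 1) t
  have hspan : span 𝕜 (x '' Iic n) = span 𝕜 (gramSchmidt 𝕜 y '' Iio (n + 1)) := by
    rw [span_gramSchmidt_Iio, Iio_add_one_eq_Iic]
    refine congrArg _ (image_congr fun i hi => (Function.update_of_ne ?_ _ _).symm)
    exact (Nat.lt_succ_of_le hi).ne
  refine eq_starProjection_of_mem_of_inner_eq_zero ?_ fun w hw => ?_
  · rw [hspan, gramSchmidt_def, show y (n + 1) = t from Function.update_self .., sub_sub_cancel]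
    refine sum_mem fun i hi => span_mono ?_ (starProjection_apply_mem (𝕜 ∙ gramSchmidt 𝕜 y i) t)
    exact singleton_subset_iff.2 (mem_image_of_mem _ (Finset.mem_Iio.1 hi))
  · have hperp : span 𝕜 (gramSchmidt 𝕜 y '' Iio (n + 1)) ≤ (𝕜 ∙ gramSchmidt 𝕜 y (n + 1))ᗮ := by
      refine span_le.2 ?_
      rintro _ ⟨i, hi, rfl⟩
      exact mem_orthogonal_singleton_iff_inner_right.2 (gramSchmidt_orthogonal 𝕜 y hi.ne')
    rw [sub_sub_cancel]
    exact mem_orthogonal_singleton_iff_inner_right.1 (hperp (hspan ▸ hw))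

theorem iSup_span_image_Iic (x : ℕ → E) : ⨆ n, span 𝕜 (x '' Iic n) = span 𝕜 (range x) := by
  rw [← span_iUnion, ← image_iUnion, iUnion_Iic, image_univ]

theorem monotone_span_image_Iic (x : ℕ → E) : Monotone fun n => span 𝕜 (x '' Iic n) :=
  fun _ _ h => span_mono (image_mono (Iic_subset_Iic.2 h))

theorem tendsto_starProjection_span_image_Iic [CompleteSpace E] (x : ℕ → E) (t : E) :
    Tendsto (fun n => (span 𝕜 (x '' Iic n)).starProjection t) atTop
      (𝓝 ((span 𝕜 (range x)).topologicalClosure.starProjection t)) := by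
  have := starProjection_tendsto_closure_iSup _ (monotone_span_image_Iic (𝕜 := 𝕜) x) t
  simpa only [iSup_span_image_Iic] using this

namespace Submodule

variable {K L : Submodule 𝕜 E} [K.HasOrthogonalProjection] [L.HasOrthogonalProjection]

theorem norm_sub_starProjection_le_of_le (hKL : K ≤ L) (t : E) :
    ‖t - L.starProjection t‖ ≤ ‖t - K.starProjection t‖ := by
  rw [starProjection_minimal t]
  exact ciInf_le ⟨0, forall_mem_range.2 fun _ => norm_nonneg _⟩
    (⟨K.starProjection t, hKL (starProjection_apply_mem K t)⟩ : L)

theorem norm_sub_starProjection_le (t : E) : ‖t - K.starProjection t‖ ≤ ‖t‖ := by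
  simpa using norm_sub_starProjection_le_of_le (bot_le : ⊥ ≤ K) t

theorem sub_starProjection_mem_orthogonal_of_norm_eq (hKL : K ≤ L) {t : E}
    (h : ‖t - K.starProjection t‖ = ‖t - L.starProjection t‖) :
    t - K.starProjection t ∈ Lᗮ := by
  rw [starProjection_minimal (U := L) t, L.norm_eq_iInf_iff_inner_eq_zero
    (hKL (starProjection_apply_mem K t))] at h
  exact (mem_orthogonal' _ _).2 h

end Submodule

theorem ContinuousLinearMap.eq_starProjection [CompleteSpace E] {T : E →L[𝕜] E} (K : Submodule 𝕜 E)
    [K.HasOrthogonalProjection] (hmem : ∀ x, T x ∈ K) (hfix : ∀ x ∈ K, T x = x)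
    (hsa : adjoint T = T) : T = K.starProjection := by
  ext x
  refine (eq_starProjection_of_mem_of_inner_eq_zero (hmem x) fun w hw => ?_).symm
  rw [inner_sub_left, ← adjoint_inner_right, hsa, hfix w hw, sub_self]

section Measurability

variable [MeasurableSpace E] [BorelSpace E] [SecondCountableTopology E]
  {α : Type*} [MeasurableSpace α]

theorem Measurable.starProjection_span_singleton {f g : α → E} (hf : Measurable f)
    (hg : Measurable g) : Measurable fun a => (𝕜 ∙ f a).starProjection (g a) := by
  simp_rw [starProjection_singleton]
  fun_prop

theorem measurable_gramSchmidt {ι : Type*} [LinearOrder ι] [LocallyFiniteOrderBot ι]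
    [WellFoundedLT ι] (n : ι) : Measurable fun x : ι → E => gramSchmidt 𝕜 x n := by
  induction n using WellFoundedLT.induction with
  | _ n ih =>
    rw [show (fun x : ι → E => gramSchmidt 𝕜 x n) = fun x => x n -
        ∑ i ∈ Finset.Iio n, (𝕜 ∙ gramSchmidt 𝕜 x i).starProjection (x n) from
      funext fun x => gramSchmidt_def 𝕜 x n]
    exact (measurable_pi_apply n).sub (Finset.measurable_sum _ fun i hi =>
      (ih i (Finset.mem_Iio.1 hi)).starProjection_span_singleton (measurable_pi_apply n))

theorem measurable_starProjection_span_image_Iic (n : ℕ) (t : E) :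
    Measurable fun x : ℕ → E => (span 𝕜 (x '' Iic n)).starProjection t := by
  simp_rw [starProjection_span_image_Iic]
  exact measurable_const.sub ((measurable_gramSchmidt (n + 1)).comp
    (measurable_update'.comp (measurable_id.prodMk measurable_const)))

theorem measurable_starProjection_topologicalClosure_span_range [CompleteSpace E] (t : E) :
    Measurable fun x : ℕ → E => (span 𝕜 (range x)).topologicalClosure.starProjection t :=
  measurable_of_tendsto_metrizable (fun n => measurable_starProjection_span_image_Iic n t)
    (tendsto_pi_nhds.2 fun x => tendsto_starProjection_span_image_Iic x t)

end Measurability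

end HilbertSpace

section IndependentSequences

variable {Ω β : Type*} [MeasurableSpace Ω] {P : Measure Ω} [MeasurableSpace β]
  {X : ℕ → Ω → β}

theorem ProbabilityTheory.iIndepFun.indepFun_tail (hmeas : ∀ n, Measurable (X n))
    (h : iIndepFun X P) : IndepFun (fun ω i => X (i + 1) ω) (X 0) P := by
  rw [IndepFun_iff_Indep]
  have hind := indep_iSup_of_disjoint (fun n => (hmeas n).comap_le)
    ((iIndepFun_iff_iIndep _ _ _).1 h)
    (disjoint_singleton_right.2 (lt_irrefl 0) : Disjoint (Ioi 0) {0})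
  refine indep_of_indep_of_le_right (indep_of_indep_of_le_left hind ?_) ?_
  · have hT : Measurable[⨆ n ∈ Ioi 0, MeasurableSpace.comap (X n) inferInstance]
        fun ω i => X (i + 1) ω := @measurable_pi_lambda _ _ _ (_) _ _ fun i =>
      (comap_measurable (X (i + 1))).mono
        (le_iSup₂ (f := fun n (_ : n ∈ Ioi 0) => MeasurableSpace.comap (X n) inferInstance)
          (i + 1) i.succ_pos) le_rfl
    exact hT.comap_le
  · exact le_iSup₂ (f := fun n (_ : n ∈ ({0} : Set ℕ)) => MeasurableSpace.comap (X n) _) 0 rfl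

theorem ProbabilityTheory.iIndepFun.map_tail_eq (hmeas : ∀ n, Measurable (X n))
    (h : iIndepFun X P) {μ : Measure β} (hdist : ∀ n, P.map (X n) = μ) :
    P.map (fun ω i => X (i + 1) ω) = P.map (fun ω i => X i ω) := by
  rw [(h.precomp Nat.succ_injective).map_fun_eq_infinitePi_map fun i => hmeas (i + 1),
    h.map_fun_eq_infinitePi_map hmeas]
  exact congrArg _ (funext fun i => (hdist (i + 1)).trans (hdist i).symm)

end IndependentSequences

theorem ae_eq_comp_of_le_of_map_eq {Ω α : Type*} [MeasurableSpace Ω] [MeasurableSpace α]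
    {P : Measure Ω} [IsFiniteMeasure P] {S T : Ω → α} (hS : Measurable S) (hT : Measurable T)
    (hST : P.map S = P.map T) {f : α → ℝ} (hf : Measurable f) {C : ℝ} (hfC : ∀ x, ‖f x‖ ≤ C)
    (hle : ∀ ω, f (S ω) ≤ f (T ω)) : f ∘ S =ᵐ[P] f ∘ T := by
  have hint : ∀ {Y : Ω → α}, Measurable Y → Integrable (f ∘ Y) P := fun hY =>
    Integrable.of_bound (hf.comp hY).aestronglyMeasurable C (ae_of_all _ fun _ => hfC _)
  refine (integral_eq_iff_of_ae_le (hint hS) (hint hT) (ae_of_all _ hle)).1 ?_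
  change ∫ ω, f (S ω) ∂P = ∫ ω, f (T ω) ∂P
  rw [← integral_map hS.aemeasurable hf.aestronglyMeasurable,
    ← integral_map hT.aemeasurable hf.aestronglyMeasurable, hST]

section Nondegenerate

variable {𝕜 E : Type*} [RCLike 𝕜] [NormedAddCommGroup E] [InnerProductSpace 𝕜 E]
  [MeasurableSpace E]

variable (𝕜) in
def IsNondegenerate (μ : Measure E) : Prop :=
  ∀ g : E, g ≠ 0 → μ {x | ⟪g, x⟫_𝕜 = 0} < 1

variable [BorelSpace E] [SecondCountableTopology E]
  {Ω : Type*} [MeasurableSpace Ω] {P : Measure Ω} [IsProbabilityMeasure P]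

theorem ae_eq_zero_of_indepFun_of_inner_eq_zero {Y Z : Ω → E} (hY : Measurable Y)
    (hZ : Measurable Z) (hind : IndepFun Y Z P) (hZ_nondeg : IsNondegenerate 𝕜 (P.map Z))
    (horth : ∀ᵐ ω ∂P, ⟪Y ω, Z ω⟫_𝕜 = 0) : ∀ᵐ ω ∂P, Y ω = 0 := by
  have := Measure.isProbabilityMeasure_map (μ := P) hZ.aemeasurable
  set S : Set (E × E) := {p | ⟪p.1, p.2⟫_𝕜 = 0}
  have hS : MeasurableSet S := (isClosed_eq continuous_inner continuous_const).measurableSet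
  have hnull : (P.map Y).prod (P.map Z) Sᶜ = 0 := by
    rw [← (indepFun_iff_map_prod_eq_prod_map_map hY.aemeasurable hZ.aemeasurable).1 hind,
      Measure.map_apply (hY.prodMk hZ) hS.compl]
    exact ae_iff.1 horth
  rw [Measure.measure_prod_null hS.compl] at hnull
  refine ae_of_ae_map (p := fun y => y = 0) hY.aemeasurable (hnull.mono fun y hy => ?_)
  by_contra hy0
  refine (hZ_nondeg y hy0).ne ?_
  exact (prob_compl_eq_zero_iff (hS.preimage measurable_prodMk_left)).1 hy

theorem ae_mem_topologicalClosure_span_range [CompleteSpace E] {X : ℕ → Ω → E}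
    (hmeas : ∀ n, Measurable (X n)) {μ : Measure E} (hdist : ∀ n, P.map (X n) = μ)
    (hindep : iIndepFun X P) (hμ : IsNondegenerate 𝕜 μ) (t : E) :
    ∀ᵐ ω ∂P, t ∈ (span 𝕜 (range fun i => X i ω)).topologicalClosure := by
  set K : (ℕ → E) → Submodule 𝕜 E := fun x => (span 𝕜 (range x)).topologicalClosure
  set r : (ℕ → E) → ℝ := fun x => ‖t - (K x).starProjection t‖
  set S : Ω → ℕ → E := fun ω i => X i ω
  set T : Ω → ℕ → E := fun ω i => X (i + 1) ω
  have hT : Measurable T := measurable_pi_lambda _ fun i => hmeas (i + 1)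
  have hKT : ∀ ω, K (T ω) ≤ K (S ω) := fun ω =>
    topologicalClosure_mono (span_mono (range_subset_iff.2 fun i => mem_range_self (i + 1)))
  have hrST : r ∘ S =ᵐ[P] r ∘ T :=
    ae_eq_comp_of_le_of_map_eq (measurable_pi_lambda _ hmeas) hT
      (hindep.map_tail_eq hmeas hdist).symm
      (measurable_const.sub (measurable_starProjection_topologicalClosure_span_range t)).norm
      (fun x => (norm_norm _).trans_le (norm_sub_starProjection_le t))
      (fun ω => norm_sub_starProjection_le_of_le (hKT ω) t)
  set g : Ω → E := fun ω => t - (K (T ω)).starProjection t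
  have horth : ∀ᵐ ω ∂P, ⟪g ω, X 0 ω⟫_𝕜 = 0 := hrST.mono fun ω hω =>
    inner_left_of_mem_orthogonal (le_topologicalClosure _ (subset_span (mem_range_self 0)))
      (sub_starProjection_mem_orthogonal_of_norm_eq (hKT ω) hω.symm)
  have hmeas_g : Measurable fun x : ℕ → E => t - (K x).starProjection t :=
    measurable_const.sub (measurable_starProjection_topologicalClosure_span_range t)
  have hind : IndepFun g (X 0) P := (hindep.indepFun_tail hmeas).comp hmeas_g measurable_id
  filter_upwards [ae_eq_zero_of_indepFun_of_inner_eq_zero (hmeas_g.comp hT) (hmeas 0) hind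
    (hdist 0 ▸ hμ) horth] with ω hω
  exact hKT ω (sub_eq_zero.1 hω ▸ starProjection_apply_mem _ t)

theorem ae_top_le_topologicalClosure_span_range [CompleteSpace E] {X : ℕ → Ω → E}
    (hmeas : ∀ n, Measurable (X n)) {μ : Measure E} (hdist : ∀ n, P.map (X n) = μ)
    (hindep : iIndepFun X P) (hμ : IsNondegenerate 𝕜 μ) :
    ∀ᵐ ω ∂P, ⊤ ≤ (span 𝕜 (range fun i => X i ω)).topologicalClosure := by
  obtain ⟨D, hD_countable, hD_dense⟩ := TopologicalSpace.exists_countable_dense E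
  have := (ae_ball_iff hD_countable).2 fun t _ =>
    ae_mem_topologicalClosure_span_range hmeas hdist hindep hμ t
  filter_upwards [this] with ω hω t _
  refine closure_minimal hω (isClosed_topologicalClosure _) ?_
  rw [hD_dense.closure_eq]
  trivial

end Nondegenerate

/-- for an i.i.d. sequence of nondegenerate random vectors `X n`, the orthogonal
projections `Pn n ω` onto `span {X 0 ω, …, X n ω}` converge almost surely to the identity in
the strong operator topology. -/
theorem stmt_11
    {H : Type*} [NormedAddCommGroup H] [InnerProductSpace ℂ H] [CompleteSpace H]
    [TopologicalSpace.SeparableSpace H]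
    [MeasurableSpace H] [BorelSpace H]
    {Ω : Type*} [MeasurableSpace Ω]
    (P : Measure Ω) [IsProbabilityMeasure P]
    (X : ℕ → Ω → H)
    (hmeas : ∀ n, Measurable (X n))
    (μ : Measure H)
    (hdist : ∀ n, Measure.map (X n) P = μ)
    (hindep : ProbabilityTheory.iIndepFun X P)
    (hμ : ∀ g : H, g ≠ 0 → μ {x : H | (inner ℂ g x : ℂ) = 0} < 1)
    (Pn : ℕ → Ω → H →L[ℂ] H)
    (hPn_mem : ∀ n ω (x : H),
      Pn n ω x ∈ Submodule.span ℂ ((fun i => X i ω) '' Set.Iic n))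
    (hPn_fix : ∀ n ω, ∀ x ∈ Submodule.span ℂ ((fun i => X i ω) '' Set.Iic n),
      Pn n ω x = x)
    (hPn_sa : ∀ n ω, ContinuousLinearMap.adjoint (Pn n ω) = Pn n ω) :
    ∀ᵐ ω ∂P, ∀ h : H, Tendsto (fun n => Pn n ω h) atTop (nhds h) := by
  have := UniformSpace.secondCountable_of_separable H
  filter_upwards [ae_top_le_topologicalClosure_span_range hmeas hdist hindep hμ] with ω hdense h
  have hproj : ∀ n, Pn n ω = (span ℂ ((fun i => X i ω) '' Iic n)).starProjection := fun n =>
    ContinuousLinearMap.eq_starProjection _ (hPn_mem n ω) (hPn_fix n ω) (hPn_sa n ω)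
  simp_rw [hproj]
  refine starProjection_tendsto_self _ (monotone_span_image_Iic _) h ?_
  rwa [iSup_span_image_Iic]
end
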